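/- Fix p ≥ 1 and block sizes n : Fin p → ℕ with n k ≥ 1, let ι := Σ k, Fin (n k), let λ : Fin p → ℝ, let u ∈ M_ι(ℂ) be unitary, and set H := u · blockDiagonal'(fun k => (λ k : ℂ) • 1_{n k}) · u†. Let G := ∏_k U(n k) with its Haar probability measure μ, let ρ ∈ M_ι(ℂ), and define D(ρ) := ∫_G (u · blockDiagonal' V · u†) · ρ · (u · blockDiagonal' V · u†)† dμ(V). Then D(ρ) · H = H · D(ρ); that is, the gauge-averaged state commutes with the Hamiltonian. -/

import Mathlib

/-! Conjugation by a gauge unitary `u V u†` permutes the integrand of the twirl `D(ρ)`, so by left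
invariance of the Haar measure `D(ρ)` is fixed by it, i.e. commutes with every gauge unitary. A
unital C⋆-algebra is spanned by its unitaries, so the gauge unitaries span all of
`u (⊕ₖ M_{n k}) u†`, which contains `H`; commuting with a set passes to its span. -/

open MeasureTheory Matrix

attribute [local instance] Matrix.normedAddCommGroup Matrix.normedSpace

noncomputable instance (m : ℕ) : MeasurableSpace (Matrix.unitaryGroup (Fin m) ℂ) := borel _
instance (m : ℕ) : BorelSpace (Matrix.unitaryGroup (Fin m) ℂ) := ⟨rfl⟩

section Twirl

variable {ι : Type*} [Fintype ι] [DecidableEq ι] {G : Type*} [MeasurableSpace G]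

lemma integral_unitary_conj (μ : Measure G) (U : unitaryGroup ι ℂ) (f : G → Matrix ι ι ℂ) :
    ∫ g, (U : Matrix ι ι ℂ) * f g * star (U : Matrix ι ι ℂ) ∂μ
      = U * (∫ g, f g ∂μ) * star (U : Matrix ι ι ℂ) :=
  (Unitary.conjStarAlgAut ℂ _ U).toAlgEquiv.toLinearEquiv.toContinuousLinearEquiv
    |>.integral_comp_comm f

variable [Group G]

noncomputable def twirl (μ : Measure G) (π : G →* unitaryGroup ι ℂ) (ρ : Matrix ι ι ℂ) :
    Matrix ι ι ℂ :=
  ∫ g, (π g : Matrix ι ι ℂ) * ρ * star (π g : Matrix ι ι ℂ) ∂μ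

variable [MeasurableMul G] (μ : Measure G) [μ.IsMulLeftInvariant]
  (π : G →* unitaryGroup ι ℂ) (ρ : Matrix ι ι ℂ)

lemma conj_twirl (g : G) :
    (π g : Matrix ι ι ℂ) * twirl μ π ρ * star (π g : Matrix ι ι ℂ) = twirl μ π ρ := by
  rw [twirl, ← integral_unitary_conj]
  conv_rhs => rw [← integral_mul_left_eq_self _ g]
  simp only [map_mul, Submonoid.coe_mul, star_mul, mul_assoc]

lemma commute_twirl (g : G) : Commute (π g : Matrix ι ι ℂ) (twirl μ π ρ) :=
  calc (π g : Matrix ι ι ℂ) * twirl μ π ρ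
        = π g * twirl μ π ρ * (star (π g : Matrix ι ι ℂ) * π g) := by
          rw [Unitary.coe_star_mul_self, mul_one]
    _ = twirl μ π ρ * π g := by rw [← mul_assoc, conj_twirl]

end Twirl

section Gauge

variable {κ : Type*} [Fintype κ] [DecidableEq κ]
  {m : κ → Type*} [∀ k, Fintype (m k)] [∀ k, DecidableEq (m k)]

lemma blockDiagonal'_mem_unitaryGroup {M : ∀ k, Matrix (m k) (m k) ℂ}
    (hM : ∀ k, M k ∈ unitaryGroup (m k) ℂ) : blockDiagonal' M ∈ unitaryGroup (Σ k, m k) ℂ := by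
  rw [mem_unitaryGroup_iff, star_eq_conjTranspose, blockDiagonal'_conjTranspose,
    ← blockDiagonal'_mul, ← blockDiagonal'_one]
  exact congrArg blockDiagonal' (funext fun k => mem_unitaryGroup_iff.1 (hM k))

noncomputable def blockDiagonalUnitary :
    (∀ k, unitaryGroup (m k) ℂ) →* unitaryGroup (Σ k, m k) ℂ where
  toFun V := ⟨blockDiagonal' fun k => (V k : Matrix (m k) (m k) ℂ),
    blockDiagonal'_mem_unitaryGroup fun k => (V k).2⟩
  map_one' := Subtype.ext blockDiagonal'_one
  map_mul' V W := Subtype.ext (blockDiagonal'_mul (fun k => (V k : Matrix (m k) (m k) ℂ))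
    (fun k => (W k : Matrix (m k) (m k) ℂ)))

noncomputable def gaugeUnitary (u : unitaryGroup (Σ k, m k) ℂ) :
    (∀ k, unitaryGroup (m k) ℂ) →* unitaryGroup (Σ k, m k) ℂ :=
  (MulAut.conj u).toMonoidHom.comp blockDiagonalUnitary

lemma coe_gaugeUnitary (u : unitaryGroup (Σ k, m k) ℂ) (V : ∀ k, unitaryGroup (m k) ℂ) :
    (gaugeUnitary u V : Matrix (Σ k, m k) (Σ k, m k) ℂ)
      = (u : Matrix _ _ ℂ) * blockDiagonal' (fun k => (V k : Matrix (m k) (m k) ℂ))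
        * star (u : Matrix _ _ ℂ) :=
  rfl

open scoped Matrix.Norms.L2Operator in
lemma blockDiagonal'_mem_span_blockDiagonalUnitary (M : ∀ k, Matrix (m k) (m k) ℂ) :
    blockDiagonal' M ∈ Submodule.span ℂ
      (Set.range fun V : ∀ k, unitaryGroup (m k) ℂ =>
        (blockDiagonalUnitary V : Matrix (Σ k, m k) (Σ k, m k) ℂ)) := by
  let L : (∀ k, Matrix (m k) (m k) ℂ) →ₗ[ℂ] Matrix (Σ k, m k) (Σ k, m k) ℂ :=
    { toFun := blockDiagonal', map_add' := blockDiagonal'_add, map_smul' := blockDiagonal'_smul }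
  have hM : M ∈ Submodule.span ℂ (unitary (∀ k, Matrix (m k) (m k) ℂ) : Set _) := by
    rw [CStarAlgebra.span_unitary]; exact Submodule.mem_top
  have hLM := Submodule.mem_map_of_mem (f := L) hM
  rw [Submodule.map_span] at hLM
  refine Submodule.span_mono ?_ hLM
  rintro _ ⟨x, hx, rfl⟩
  exact ⟨fun k => ⟨x k, Unitary.mem_iff.2 ⟨congrFun (Unitary.star_mul_self_of_mem hx) k,
    congrFun (Unitary.mul_star_self_of_mem hx) k⟩⟩, rfl⟩

lemma conj_blockDiagonal'_mem_span_gaugeUnitary (u : unitaryGroup (Σ k, m k) ℂ)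
    (M : ∀ k, Matrix (m k) (m k) ℂ) :
    (u : Matrix _ _ ℂ) * blockDiagonal' M * star (u : Matrix _ _ ℂ) ∈ Submodule.span ℂ
      (Set.range fun V : ∀ k, unitaryGroup (m k) ℂ =>
        (gaugeUnitary u V : Matrix (Σ k, m k) (Σ k, m k) ℂ)) := by
  have h := Submodule.mem_map_of_mem
    (f := (Unitary.conjStarAlgAut ℂ _ u).toAlgEquiv.toLinearEquiv.toLinearMap)
    (blockDiagonal'_mem_span_blockDiagonalUnitary M)
  rwa [Submodule.map_span, ← Set.range_comp] at h

end Gauge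

theorem gauge_average_commutes_with_hamiltonian (p : ℕ)
    (n : Fin p → ℕ) (lam : Fin p → ℝ)
    (u : Matrix (Σ k, Fin (n k)) (Σ k, Fin (n k)) ℂ)
    (hu : u ∈ Matrix.unitaryGroup (Σ k, Fin (n k)) ℂ)
    (μ : Measure (∀ k, Matrix.unitaryGroup (Fin (n k)) ℂ))
    [μ.IsHaarMeasure]
    (ρ : Matrix (Σ k, Fin (n k)) (Σ k, Fin (n k)) ℂ) :
    (∫ V : ∀ k, Matrix.unitaryGroup (Fin (n k)) ℂ,
        (u * Matrix.blockDiagonal' (fun k => (V k : Matrix (Fin (n k)) (Fin (n k)) ℂ)) * star u)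
          * ρ *
          star (u * Matrix.blockDiagonal'
            (fun k => (V k : Matrix (Fin (n k)) (Fin (n k)) ℂ)) * star u) ∂μ) *
        (u * Matrix.blockDiagonal'
          (fun k => (lam k : ℂ) • (1 : Matrix (Fin (n k)) (Fin (n k)) ℂ)) * star u)
      = (u * Matrix.blockDiagonal'
          (fun k => (lam k : ℂ) • (1 : Matrix (Fin (n k)) (Fin (n k)) ℂ)) * star u) *
        (∫ V : ∀ k, Matrix.unitaryGroup (Fin (n k)) ℂ,
          (u * Matrix.blockDiagonal' (fun k => (V k : Matrix (Fin (n k)) (Fin (n k)) ℂ)) * star u)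
            * ρ *
            star (u * Matrix.blockDiagonal'
              (fun k => (V k : Matrix (Fin (n k)) (Fin (n k)) ℂ)) * star u) ∂μ) := by
  obtain ⟨U, rfl⟩ : ∃ U : unitaryGroup _ ℂ, (U : Matrix _ _ ℂ) = u := ⟨⟨u, hu⟩, rfl⟩
  simp_rw [← coe_gaugeUnitary]
  refine (Commute.span_left ?_ _ (conj_blockDiagonal'_mem_span_gaugeUnitary U _)).symm.eq
  rintro _ ⟨V, rfl⟩
  exact commute_twirl μ (gaugeUnitary U) ρ V
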